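/- Let I be an almost reverse lexicographic ideal in R = k[x_1,...,x_n] with max M_ω(I) = n. Then min{t : x_{n-1}^t ∈ I} = min{d : H(R/I,d) ≤ H(R/I,d-1)}. -/

import Mathlib

open scoped Classical

/-- Degree of an exponent vector (monomial). -/
def mdeg {n : ℕ} (m : Fin n → ℕ) : ℕ := ∑ i, m i

/-- Degree reverse lexicographic order: `M > N`. -/
def RevLexGT {n : ℕ} (M N : Fin n → ℕ) : Prop :=
  mdeg N < mdeg M ∨
    (mdeg M = mdeg N ∧ ∃ s : Fin n, (∀ i : Fin n, s < i → M i = N i) ∧ M s < N s)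

/-- A monomial ideal, identified with its set of monomials (exponent vectors),
is upward closed under divisibility. -/
def MonIdeal {n : ℕ} (I : Set (Fin n → ℕ)) : Prop :=
  ∀ m ∈ I, ∀ m' : Fin n → ℕ, (∀ i, m i ≤ m' i) → m' ∈ I

/-- `m` is a minimal generator of the monomial ideal `I`. -/
def MinGen {n : ℕ} (I : Set (Fin n → ℕ)) (m : Fin n → ℕ) : Prop :=
  m ∈ I ∧ ∀ m' ∈ I, (∀ i, m' i ≤ m i) → m' = m

/-- Almost reverse lexicographic ideal. -/
def ARL {n : ℕ} (I : Set (Fin n → ℕ)) : Prop :=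
  ∀ M N : Fin n → ℕ, MinGen I N → mdeg M = mdeg N → RevLexGT M N → M ∈ I

/-- Strongly stable monomial ideal. -/
def StronglyStable {n : ℕ} (I : Set (Fin n → ℕ)) : Prop :=
  MonIdeal I ∧ ∀ M ∈ I, ∀ i j : Fin n, j < i → 0 < M i →
    (fun k => if k = i then M i - 1 else if k = j then M j + 1 else M k) ∈ I

/-- The last generator `M_ω` of a monomial ideal: a minimal generator of maximal
degree which is smallest in the degree reverse lexicographic order among the
minimal generators of that degree. -/
def IsLastGen {n : ℕ} (I : Set (Fin n → ℕ)) (W : Fin n → ℕ) : Prop :=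
  MinGen I W ∧ (∀ N, MinGen I N → mdeg N ≤ mdeg W) ∧
    (∀ N, MinGen I N → mdeg N = mdeg W → N = W ∨ RevLexGT N W)

/-- `max M`: the largest (1-based) index of a variable dividing `M` (0 for `M = 1`). -/
def maxVar {n : ℕ} (m : Fin n → ℕ) : ℕ :=
  Finset.univ.sup (fun i : Fin n => if 0 < m i then i.1 + 1 else 0)

/-- Hilbert function of `R/I`: the number of monomials of degree `d` not in `I`. -/
noncomputable def hilb {n : ℕ} (I : Set (Fin n → ℕ)) (d : ℕ) : ℕ :=
  Set.ncard {m : Fin n → ℕ | mdeg m = d ∧ m ∉ I}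

/-- Truncation of an exponent vector to its first `i` coordinates. -/
def truncW {n : ℕ} (W : Fin n → ℕ) (i : ℕ) : Fin n → ℕ :=
  fun j => if j.1 < i then W j else 0

/-- The set `𝓘_i` (for `i ≤ μ-2`): exponent vectors supported on the first `i`
coordinates, coordinatewise below the `f_j`'s, i.e. not lying in `I`. -/
def Iset {n : ℕ} (I : Set (Fin n → ℕ)) (i : ℕ) : Set (Fin n → ℕ) :=
  {α | (∀ k : Fin n, i ≤ k.1 → α k = 0) ∧ α ∉ I}

/-- The set `𝓘_{μ-1}`, which additionally requires `α ≥ (ω_1,…,ω_{μ-1})`. -/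
def IsetLast {n : ℕ} (I : Set (Fin n → ℕ)) (W : Fin n → ℕ) (μ : ℕ) :
    Set (Fin n → ℕ) :=
  {α | α ∈ Iset I (μ - 1) ∧ (α = truncW W (μ - 1) ∨ RevLexGT α (truncW W (μ - 1)))}

/-- `f_{i+1}(α) = min {t : x^α x_{i+1}^t ∈ I}` (ℕ-valued, junk `0` if no such `t`). -/
noncomputable def fmin {n : ℕ} (I : Set (Fin n → ℕ)) (α : Fin n → ℕ) (i : Fin n) : ℕ :=
  sInf {t | α + Pi.single i t ∈ I}

/-- `f_{i+1}(α)` valued in `ℕ∞` (equal to `⊤` when no power works). -/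
noncomputable def fminTop {n : ℕ} (I : Set (Fin n → ℕ)) (α : Fin n → ℕ) (i : Fin n) : ℕ∞ :=
  sInf ((fun t : ℕ => (t : ℕ∞)) '' {t | α + Pi.single i t ∈ I})

/-- Iterated truncated difference sequence `h^{(i)}`. -/
def hseq (h : ℕ → ℕ) : ℕ → ℕ → ℕ
  | 0, d => h d
  | _ + 1, 0 => 1
  | i + 1, e + 1 => hseq h i (e + 1) - hseq h i e

/-- The set whose infimum is `r_i(h)`. -/
def rset (h : ℕ → ℕ) (i : ℕ) : Set ℕ :=
  {d | 1 ≤ d ∧ hseq h i d ≤ hseq h i (d - 1)}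

/-- `D(h) = min {i : r_i < ∞}`. -/
noncomputable def Dval (h : ℕ → ℕ) : ℕ := sInf {i | (rset h i).Nonempty}

/-- `h` is unimodal at each tail. -/
def UnimodalAtTails (h : ℕ → ℕ) : Prop :=
  ∀ i, Dval h ≤ i → i < max 1 (h 1) →
    ∀ d, (∃ r ∈ rset h i, r ≤ d) → hseq h i d ≤ hseq h i (d - 1)

/-- The polynomial `Π (1 - z^{d_i})`. -/
noncomputable def froPoly (ds : List ℕ) : Polynomial ℤ :=
  (ds.map (fun d => 1 - Polynomial.X ^ d)).prod

/-- Coefficient of `z^i` in the power series `Π (1 - z^{d_i}) / (1-z)^n`. -/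
noncomputable def froCoeff (n : ℕ) (ds : List ℕ) (i : ℕ) : ℤ :=
  ∑ j ∈ Finset.range (i + 1),
    (froPoly ds).coeff j * (Nat.choose (n - 1 + (i - j)) (i - j) : ℤ)

/-- The Fröberg sequence `|n; d_1,…,d_m|`: the truncation `| · |` of the power
series `Π (1 - z^{d_i}) / (1-z)^n`. -/
noncomputable def fro (n : ℕ) (ds : List ℕ) (i : ℕ) : ℕ :=
  if ∀ j ≤ i, 0 < froCoeff n ds j then (froCoeff n ds i).toNat else 0

/-!
Multiplication by the last variable `x_n` maps the degree-`(d-1)` monomials outside `I` into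
the degree-`d` ones, and it stays outside `I` as long as `x_{n-1}^d ∉ I`: a generator dividing
`x^m x_n` would have to involve `x_n`, and the almost reverse lexicographic property then puts
the revlex-larger `x_{n-1}^{deg}` of the same degree into `I`. Since `x_{n-1}^d` itself is
missed by the image, `H` strictly increases before the first pure power `x_{n-1}^t ∈ I`. In
degree `t` every monomial in `x_1, …, x_{n-1}` is revlex-above the generator `x_{n-1}^t`, hence
in `I`, so division by `x_n` injects the degree-`t` monomials outside `I` into degree `t-1`.
-/

section Monomials

variable {n : ℕ}

lemma mdeg_add (m m' : Fin n → ℕ) : mdeg (m + m') = mdeg m + mdeg m' :=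
  Finset.sum_add_distrib

lemma mdeg_single (i : Fin n) (t : ℕ) : mdeg (Pi.single i t) = t := by
  simp [mdeg]

lemma mdeg_mono {m m' : Fin n → ℕ} (h : m ≤ m') : mdeg m ≤ mdeg m' :=
  Finset.sum_le_sum fun i _ => h i

lemma apply_le_mdeg (m : Fin n → ℕ) (i : Fin n) : m i ≤ mdeg m :=
  Finset.single_le_sum (fun _ _ => Nat.zero_le _) (Finset.mem_univ i)

lemma eq_of_le_of_mdeg_le {m m' : Fin n → ℕ} (h : m ≤ m') (hd : mdeg m' ≤ mdeg m) :
    m = m' := by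
  by_contra hne
  obtain ⟨i, hi⟩ := (Pi.lt_def.mp (lt_of_le_of_ne h hne)).2
  have : mdeg m < mdeg m' := Finset.sum_lt_sum (fun j _ => h j) ⟨i, Finset.mem_univ i, hi⟩
  omega

lemma eq_single_of_le_single {m : Fin n → ℕ} {j : Fin n} {t : ℕ} (h : m ≤ Pi.single j t) :
    m = Pi.single j (m j) := by
  funext i
  by_cases hi : i = j
  · subst hi; simp
  · simpa [Pi.single_eq_of_ne hi] using h i

lemma single_le_of_le_apply {m : Fin n → ℕ} {j : Fin n} {t : ℕ} (h : t ≤ m j) :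
    Pi.single j t ≤ m := fun i => by
  by_cases hi : i = j
  · subst hi; simpa using h
  · simp [Pi.single_eq_of_ne hi]

lemma finite_setOf_mdeg_eq_notMem (I : Set (Fin n → ℕ)) (d : ℕ) :
    {m : Fin n → ℕ | mdeg m = d ∧ m ∉ I}.Finite := by
  refine (Set.Finite.pi fun _ : Fin n => Set.finite_Iic d).subset ?_
  rintro m ⟨hd, -⟩ i -
  exact hd ▸ apply_le_mdeg m i

end Monomials

section MonomialIdeals

variable {n : ℕ} {I : Set (Fin n → ℕ)}

lemma exists_minGen_le {M : Fin n → ℕ} (hM : M ∈ I) : ∃ N, MinGen I N ∧ N ≤ M := by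
  obtain ⟨N, ⟨hN, hNM⟩, hmin⟩ :=
    (measure (mdeg (n := n))).wf.has_min {N | N ∈ I ∧ N ≤ M} ⟨M, hM, le_rfl⟩
  refine ⟨N, ⟨hN, fun m hm hmN => ?_⟩, hNM⟩
  have hmM : m ≤ M := le_trans (α := Fin n → ℕ) hmN hNM
  exact eq_of_le_of_mdeg_le hmN (not_lt.mp (hmin m ⟨hm, hmM⟩))

lemma zero_notMem_of_minGen {W : Fin n → ℕ} (hW : MinGen I W) (hW0 : W ≠ 0) :
    (0 : Fin n → ℕ) ∉ I :=
  fun h => hW0 (hW.2 0 h fun _ => Nat.zero_le _).symm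

lemma minGen_single {j : Fin n} {t : ℕ} (ht : Pi.single j t ∈ I)
    (hlt : ∀ s < t, Pi.single j s ∉ I) : MinGen I (Pi.single j t) := by
  refine ⟨ht, fun m hm hle => ?_⟩
  have hm_eq := eq_single_of_le_single hle
  have hle' : m j ≤ t := by simpa using hle j
  have hge : t ≤ m j := not_lt.mp fun h => hlt _ h (hm_eq ▸ hm)
  rw [hm_eq, le_antisymm hle' hge]

lemma hilb_succ_le_of_forall_pos (hI : MonIdeal I) {d : ℕ} (k : Fin n)
    (hpos : ∀ m, mdeg m = d + 1 → m ∉ I → 0 < m k) : hilb I (d + 1) ≤ hilb I d := by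
  have hcancel : ∀ m, mdeg m = d + 1 → m ∉ I → m - Pi.single k 1 + Pi.single k 1 = m :=
    fun m hmd hmI => tsub_add_cancel_of_le (single_le_of_le_apply (hpos m hmd hmI))
  refine Set.ncard_le_ncard_of_injOn (· - Pi.single k 1) ?_ ?_
    (finite_setOf_mdeg_eq_notMem I d)
  · rintro m ⟨hmd, hmI⟩
    refine ⟨?_, fun h => hmI (hI _ h m fun _ => tsub_le_self)⟩
    have := congrArg mdeg (hcancel m hmd hmI)
    rw [mdeg_add, mdeg_single] at this
    omega
  · rintro a ⟨had, haI⟩ b ⟨hbd, hbI⟩ (hab : a - _ = b - _)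
    rw [← hcancel a had haI, ← hcancel b hbd hbI, hab]

end MonomialIdeals

section AlmostRevLex

variable {n : ℕ} {I : Set (Fin (n + 1) → ℕ)} {j : Fin (n + 1)}

lemma single_mdeg_mem_of_minGen (hARL : ARL I) (hj : j ≠ Fin.last n) {g : Fin (n + 1) → ℕ}
    (hg : MinGen I g) (hgl : 0 < g (Fin.last n)) : Pi.single j (mdeg g) ∈ I := by
  refine hARL _ g hg (mdeg_single _ _) (Or.inr ⟨mdeg_single _ _, Fin.last n, ?_, ?_⟩)
  · exact fun i hi => absurd (Fin.le_last i) (not_le.mpr hi)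
  · rwa [Pi.single_eq_of_ne (Ne.symm hj)]

lemma add_single_last_notMem (hI : MonIdeal I) (hARL : ARL I) (hj : j ≠ Fin.last n)
    {d : ℕ} (hd : Pi.single j d ∉ I) {m : Fin (n + 1) → ℕ} (hm : m ∉ I)
    (hmd : mdeg m < d) :
    m + Pi.single (Fin.last n) 1 ∉ I := by
  intro hmem
  obtain ⟨g, hg, hgm⟩ := exists_minGen_le hmem
  by_cases hgl : 0 < g (Fin.last n)
  · have hgd : mdeg g ≤ d := by
      have := mdeg_mono hgm
      rw [mdeg_add, mdeg_single] at this
      omega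
    exact hd (hI _ (single_mdeg_mem_of_minGen hARL hj hg hgl) _
      (Pi.single_le_single.mpr hgd))
  · refine hm (hI g hg.1 m fun i => ?_)
    by_cases hi : i = Fin.last n
    · subst hi; omega
    · simpa [Pi.single_eq_of_ne hi] using hgm i

lemma hilb_lt_hilb_succ (hI : MonIdeal I) (hARL : ARL I) (hj : j ≠ Fin.last n) {d : ℕ}
    (hd : Pi.single j (d + 1) ∉ I) : hilb I d < hilb I (d + 1) := by
  set ψ : (Fin (n + 1) → ℕ) → (Fin (n + 1) → ℕ) := (· + Pi.single (Fin.last n) 1)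
  have hmaps : ψ '' {m | mdeg m = d ∧ m ∉ I} ⊆ {m | mdeg m = d + 1 ∧ m ∉ I} := by
    rintro _ ⟨m, ⟨hmd, hmI⟩, rfl⟩
    exact ⟨by simp [ψ, mdeg_add, mdeg_single, hmd],
      add_single_last_notMem hI hARL hj hd hmI (by omega)⟩
  have hmissed : Pi.single j (d + 1) ∉ ψ '' {m | mdeg m = d ∧ m ∉ I} := by
    rintro ⟨m, -, hm⟩
    simpa [ψ, Pi.single_eq_of_ne (Ne.symm hj)] using congrFun hm (Fin.last n)
  calc hilb I d = (ψ '' {m | mdeg m = d ∧ m ∉ I}).ncard :=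
        (Set.ncard_image_of_injective _ (add_left_injective _)).symm
    _ < hilb I (d + 1) :=
        Set.ncard_lt_ncard ((Set.ssubset_iff_of_subset hmaps).mpr
            ⟨_, ⟨mdeg_single _ _, hd⟩, hmissed⟩)
          (finite_setOf_mdeg_eq_notMem I (d + 1))

lemma mem_of_forall_lt_eq_zero (hARL : ARL I) {t : ℕ} (hgen : MinGen I (Pi.single j t))
    {m : Fin (n + 1) → ℕ} (hmd : mdeg m = t) (hm : ∀ i, j < i → m i = 0) : m ∈ I := by
  have hmj : m j ≤ t := hmd ▸ apply_le_mdeg m j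
  rcases hmj.lt_or_eq with hlt | heq
  · have hdeg : mdeg m = mdeg (Pi.single j t) := by rw [hmd, mdeg_single]
    refine hARL m _ hgen hdeg (Or.inr ⟨hdeg, j, ?_, ?_⟩)
    · intro i hi
      rw [hm i hi, Pi.single_eq_of_ne (ne_of_gt hi)]
    · rwa [Pi.single_eq_same]
  · have hsingle : Pi.single j t ≤ m := single_le_of_le_apply heq.ge
    exact (eq_of_le_of_mdeg_le hsingle (by rw [hmd, mdeg_single])) ▸ hgen.1

end AlmostRevLex

lemma hilb_succ_le_of_minGen_single {n : ℕ} {I : Set (Fin (n + 2) → ℕ)} (hI : MonIdeal I)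
    (hARL : ARL I) {d : ℕ} (hgen : MinGen I (Pi.single (Fin.last n).castSucc (d + 1))) :
    hilb I (d + 1) ≤ hilb I d := by
  refine hilb_succ_le_of_forall_pos hI (Fin.last (n + 1)) fun m hmd hmI => ?_
  by_contra hl
  refine hmI (mem_of_forall_lt_eq_zero hARL hgen hmd fun i hi => ?_)
  have hlast : i = Fin.last (n + 1) := by
    rw [Fin.lt_def, Fin.val_castSucc, Fin.val_last] at hi
    exact Fin.ext (by rw [Fin.val_last]; omega)
  rw [hlast]
  omega

lemma Nat.sInf_eq_of_subset_of_sInf_mem {S D : Set ℕ} (hDS : D ⊆ S)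
    (hS : S.Nonempty → sInf S ∈ D) : sInf D = sInf S := by
  rcases S.eq_empty_or_nonempty with rfl | hne
  · rw [Set.subset_empty_iff.mp hDS]
  · exact le_antisymm (Nat.sInf_le (hS hne))
      (csInf_le_csInf (OrderBot.bddBelow S) ⟨_, hS hne⟩ hDS)

/-- `min{t : x_{n-1}^t ∈ I} = min{d : H(R/I,d) ≤ H(R/I,d-1)}`. -/
theorem arl_f_eq_first_descent {n : ℕ} (I : Set (Fin (n + 2) → ℕ))
    (hI : MonIdeal I) (hARL : ARL I)
    (W : Fin (n + 2) → ℕ) (hW : IsLastGen I W) (hWn : maxVar W = n + 2) :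
    sInf {t | Pi.single (⟨n, by omega⟩ : Fin (n + 2)) t ∈ I} =
      sInf {d | 1 ≤ d ∧ hilb I d ≤ hilb I (d - 1)} := by
  have hj : (⟨n, by omega⟩ : Fin (n + 2)) ≠ Fin.last (n + 1) := by simp [Fin.ext_iff]
  have hW0 : W ≠ 0 := by
    rintro rfl
    exact Nat.succ_ne_zero _ (hWn.symm.trans (Finset.sup_bot _))
  have h0 : (0 : Fin (n + 2) → ℕ) ∉ I := zero_notMem_of_minGen hW.1 hW0
  set S := {t | Pi.single (⟨n, by omega⟩ : Fin (n + 2)) t ∈ I}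
  refine (Nat.sInf_eq_of_subset_of_sInf_mem ?_ fun hne => ?_).symm
  · rintro _ ⟨hd, hdesc⟩
    obtain ⟨d, rfl⟩ := Nat.exists_eq_add_of_le' hd
    by_contra hnot
    exact (hilb_lt_hilb_succ hI hARL hj hnot).not_ge hdesc
  · have ht : sInf S ∈ S := Nat.sInf_mem hne
    obtain ⟨d, hd⟩ := Nat.exists_eq_add_one_of_ne_zero (n := sInf S) fun hS0 => h0 (by
      rwa [hS0, Set.mem_ofPred_eq, Pi.single_zero] at ht)
    refine ⟨by omega, ?_⟩
    rw [hd, add_tsub_cancel_right]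
    exact hilb_succ_le_of_minGen_single hI hARL
      (hd ▸ minGen_single ht fun s hs => Nat.notMem_of_lt_sInf hs)
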